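/- Let Q be a quadrature rule on the reference triangle T that is exact for degree ≤ d, and let f : ℝ² → ℝ be of class C^{d+1} on an open set containing T. Then there exists a constant C ≥ 0 such that for every m ∈ ℕ, the m-fold composite error satisfies |E_m(f)| ≤ C · 2^{−m(d+1)}. -/

import Mathlib

open MeasureTheory

/-- The reference triangle: convex hull of (0,0), (1,0), (0,1). -/
noncomputable def refTriangle : Set (ℝ × ℝ) :=
  convexHull ℝ ({(0, 0), (1, 0), (0, 1)} : Set (ℝ × ℝ))

/-- Evaluation of a bivariate polynomial at a point of ℝ². -/
noncomputable def evalP (p : MvPolynomial (Fin 2) ℝ) (q : ℝ × ℝ) : ℝ :=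
  MvPolynomial.eval ![q.1, q.2] p

/-- Action of the quadrature rule with nodes `x` and weights `w`: Q(f) = ∑ wᵢ f(xᵢ). -/
noncomputable def quadApply {n : ℕ} (x : Fin n → ℝ × ℝ) (w : Fin n → ℝ)
    (f : ℝ × ℝ → ℝ) : ℝ :=
  ∑ i, w i * f (x i)

/-- Error functional of the quadrature rule: E_Q(f) = ∫_T f - Q(f). -/
noncomputable def errQ {n : ℕ} (x : Fin n → ℝ × ℝ) (w : Fin n → ℝ)
    (f : ℝ × ℝ → ℝ) : ℝ :=
  (∫ q in refTriangle, f q) - quadApply x w f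

/-- Exactness of the quadrature rule for all polynomials of total degree ≤ d. -/
def ExactDeg {n : ℕ} (x : Fin n → ℝ × ℝ) (w : Fin n → ℝ) (d : ℕ) : Prop :=
  ∀ p : MvPolynomial (Fin 2) ℝ, p.totalDegree ≤ d →
    (∫ q in refTriangle, evalP p q) = quadApply x w (evalP p)

/-- The four midpoint-subdivision affine maps A₁, A₂, A₃, A₄. -/
noncomputable def subdivMap : Fin 4 → (ℝ × ℝ) → (ℝ × ℝ) :=
  ![fun v => (1/2 + v.1/2, v.2/2),
    fun v => (v.1/2, 1/2 + v.2/2),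
    fun v => (v.1/2, v.2/2),
    fun v => (1/2 - v.1/2, 1/2 - v.2/2)]

/-- Composition A_{s 0} ∘ A_{s 1} ∘ ⋯ ∘ A_{s (m-1)}. -/
noncomputable def compSubdiv : {m : ℕ} → (Fin m → Fin 4) → (ℝ × ℝ) → (ℝ × ℝ)
  | 0, _ => id
  | _ + 1, s => subdivMap (s 0) ∘ compSubdiv (fun i => s i.succ)

/-- The m-fold composite rule Q_m(f) = 4⁻ᵐ ∑_{s ∈ {1,2,3,4}ᵐ} Q(f ∘ A_{s₁} ∘ ⋯ ∘ A_{sₘ}). -/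
noncomputable def Qm {n : ℕ} (x : Fin n → ℝ × ℝ) (w : Fin n → ℝ) (m : ℕ)
    (f : ℝ × ℝ → ℝ) : ℝ :=
  ((4 : ℝ) ^ m)⁻¹ * ∑ s : Fin m → Fin 4, quadApply x w (f ∘ compSubdiv s)

/-- Error of the m-fold composite rule: E_m(f) = ∫_T f - Q_m(f). -/
noncomputable def Em {n : ℕ} (x : Fin n → ℝ × ℝ) (w : Fin n → ℝ) (m : ℕ)
    (f : ℝ × ℝ → ℝ) : ℝ :=
  (∫ q in refTriangle, f q) - Qm x w m f


/-!
Midpoint subdivision tiles `T` by the four triangles `A_j(T)`, which overlap only on the three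
midlines and on which the change of variables has Jacobian `1/4`. Iterating,
`E_m(f) = 4⁻ᵐ ∑_s E_Q(f ∘ A_s)` with `A_s = A_{s₁} ∘ ⋯ ∘ A_{sₘ}` of the form `v ↦ b + c • v`,
`|c| = 2⁻ᵐ`. If `P` is the degree-`d` Taylor polynomial of `f` at `b`, then `P ∘ A_s` is again a
polynomial of degree `≤ d`, so `E_Q(f ∘ A_s) = E_Q((f - P) ∘ A_s)`; and Taylor's theorem bounds
`|f - P|` on `A_s(T)` by `M (2⁻ᵐ)^(d+1)`, where `M` bounds `D^(d+1) f` on `T`. Hence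
`|E_m(f)| ≤ (|T| + ∑ |wᵢ|) M 2^(-m(d+1))`.
-/

open Set Function Module
open scoped Nat Interval

theorem exists_norm_sub_taylor_le_of_contDiffOn {E F : Type*} [NormedAddCommGroup E]
    [NormedSpace ℝ E] [NormedAddCommGroup F] [NormedSpace ℝ F] [CompleteSpace F]
    {f : E → F} {K U : Set E} {n : ℕ} (hK : IsCompact K) (hKc : Convex ℝ K) (hU : IsOpen U)
    (hKU : K ⊆ U) (hf : ContDiffOn ℝ (n + 1) f U) :
    ∃ M, 0 ≤ M ∧ ∀ a ∈ K, ∀ y ∈ K,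
      ‖f y - ∑ k ∈ Finset.range (n + 1), (k ! : ℝ)⁻¹ • iteratedFDeriv ℝ k f a (fun _ ↦ y - a)‖
        ≤ M * ‖y - a‖ ^ (n + 1) := by
  have hcont : ContinuousOn (iteratedFDeriv ℝ (n + 1) f) K :=
    ((hf.continuousOn_iteratedFDerivWithin (m := n + 1) (by norm_cast) hU.uniqueDiffOn).congr
      (iteratedFDerivWithin_of_isOpen _ hU).symm).mono hKU
  obtain ⟨M, hM⟩ := hK.exists_bound_of_continuousOn hcont
  refine ⟨max M 0, le_max_right _ _, fun a ha y hy ↦ ?_⟩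
  have hseg : ∀ t ∈ Icc (0 : ℝ) 1, a + t • (y - a) ∈ K := fun t ht ↦ hKc.add_smul_sub_mem ha hy ht
  have htaylor := map_add_eq_sum_add_integral_iteratedFDeriv (x := a) (y := y - a)
    fun t ht ↦ hf.contDiffAt (hU.mem_nhds (hKU (hseg t ht)))
  rw [add_sub_cancel] at htaylor
  have hremainder : ∀ t ∈ Ι (0 : ℝ) 1,
      ‖(1 - t) ^ n • iteratedFDeriv ℝ (n + 1) f (a + t • (y - a)) (fun _ ↦ y - a)‖
        ≤ max M 0 * ‖y - a‖ ^ (n + 1) := by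
    intro t ht
    rw [uIoc_of_le zero_le_one] at ht
    have h1t : ‖(1 - t) ^ n‖ ≤ 1 := by
      rw [norm_pow, Real.norm_of_nonneg (by linarith [ht.2])]
      exact pow_le_one₀ (by linarith [ht.2]) (by linarith [ht.1])
    calc _ ≤ 1 * (‖iteratedFDeriv ℝ (n + 1) f (a + t • (y - a))‖ * ∏ _ : Fin (n + 1), ‖y - a‖) :=
          norm_smul_le _ _ |>.trans (mul_le_mul h1t (ContinuousMultilinearMap.le_opNorm _ _)
            (norm_nonneg _) zero_le_one)
      _ ≤ max M 0 * ‖y - a‖ ^ (n + 1) := by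
          rw [one_mul, Finset.prod_const, Finset.card_univ, Fintype.card_fin]
          gcongr
          exact (hM _ (hseg t (Ioc_subset_Icc_self ht))).trans (le_max_left _ _)
  calc _ = ‖(n ! : ℝ)⁻¹ • ∫ t in (0 : ℝ)..1, (1 - t) ^ n •
        iteratedFDeriv ℝ (n + 1) f (a + t • (y - a)) (fun _ ↦ y - a)‖ := by
        rw [htaylor, add_sub_cancel_left]
    _ ≤ 1 * (max M 0 * ‖y - a‖ ^ (n + 1) * |1 - 0|) := by
        rw [norm_smul]
        refine mul_le_mul ?_ (intervalIntegral.norm_integral_le_of_norm_le_const hremainder)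
          (norm_nonneg _) zero_le_one
        rw [norm_inv, Real.norm_natCast]
        exact inv_le_one_of_one_le₀ (by exact_mod_cast Nat.factorial_pos n)
    _ = max M 0 * ‖y - a‖ ^ (n + 1) := by simp

theorem addHaar_setOf_apply_eq {E : Type*} [NormedAddCommGroup E] [NormedSpace ℝ E]
    [MeasurableSpace E] [BorelSpace E] [FiniteDimensional ℝ E] (μ : Measure E)
    [μ.IsAddHaarMeasure] {ℓ : E →ₗ[ℝ] ℝ} (hℓ : ℓ ≠ 0) (c : ℝ) : μ {p | ℓ p = c} = 0 := by
  rcases eq_empty_or_nonempty {p | ℓ p = c} with h | ⟨p₀, hp₀ : ℓ p₀ = c⟩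
  · rw [h, measure_empty]
  have hker : {p | ℓ p = c} = (· + -p₀) ⁻¹' (LinearMap.ker ℓ) := by
    ext p
    simp [← hp₀, ← sub_eq_add_neg, sub_eq_zero]
  rw [hker, measure_preimage_add_right]
  exact Measure.addHaar_submodule μ _ (by rwa [ne_eq, LinearMap.ker_eq_top])

theorem setIntegral_image_add_smul {E F : Type*} [NormedAddCommGroup E] [NormedSpace ℝ E]
    [FiniteDimensional ℝ E] [MeasurableSpace E] [BorelSpace E] [NormedAddCommGroup F]
    [NormedSpace ℝ F] (μ : Measure E) [μ.IsAddHaarMeasure] {s : Set E} (hs : MeasurableSet s)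
    (b : E) {c : ℝ} (hc : c ≠ 0) (g : E → F) :
    ∫ p in (fun v ↦ b + c • v) '' s, g p ∂μ = |c| ^ finrank ℝ E • ∫ v in s, g (b + c • v) ∂μ := by
  have hderiv : ∀ v ∈ s, HasFDerivWithinAt (fun v ↦ b + c • v)
      (c • ContinuousLinearMap.id ℝ E) s v := fun v _ ↦
    ((hasFDerivAt_id v).const_smul c).const_add b |>.hasFDerivWithinAt
  have hinj : InjOn (fun v ↦ b + c • v) s := fun u _ v _ h ↦
    smul_right_injective E hc (add_left_cancel h)
  rw [integral_image_eq_integral_abs_det_fderiv_smul μ hs hderiv hinj, integral_smul]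
  congr 1
  rw [ContinuousLinearMap.det, ContinuousLinearMap.toLinearMap_smul, ContinuousLinearMap.coe_id,
    LinearMap.det_smul, LinearMap.det_id, mul_one, abs_pow]

theorem continuous_evalP (p : MvPolynomial (Fin 2) ℝ) : Continuous (evalP p) :=
  (MvPolynomial.continuous_eval p).comp (by fun_prop)

theorem exists_evalP_eq_apply_diag {k : ℕ}
    (L : ContinuousMultilinearMap ℝ (fun _ : Fin k ↦ ℝ × ℝ) ℝ) :
    ∃ p : MvPolynomial (Fin 2) ℝ, p.totalDegree ≤ k ∧ ∀ v, evalP p v = L (fun _ ↦ v) := by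
  let e : Fin 2 → ℝ × ℝ := ![(1, 0), (0, 1)]
  refine ⟨∑ r : Fin k → Fin 2, MvPolynomial.C (L fun i ↦ e (r i)) * ∏ i, MvPolynomial.X (r i),
    ?_, fun v ↦ ?_⟩
  · refine (MvPolynomial.totalDegree_finsetSum _ _).trans (Finset.sup_le fun r _ ↦ ?_)
    refine (MvPolynomial.totalDegree_mul _ _).trans ?_
    rw [MvPolynomial.totalDegree_C, zero_add]
    refine (MvPolynomial.totalDegree_finsetProd _ _).trans ?_
    simp
  · have hv : v = ∑ j, ![v.1, v.2] j • e j := by simp [e, Fin.sum_univ_two]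
    conv_rhs => rw [hv, ContinuousMultilinearMap.map_sum]
    simp [evalP, map_sum, ContinuousMultilinearMap.map_smul_univ, mul_comm]

theorem exists_evalP_eq_sum_apply_diag (d : ℕ)
    (L : ∀ k : ℕ, ContinuousMultilinearMap ℝ (fun _ : Fin k ↦ ℝ × ℝ) ℝ) :
    ∃ p : MvPolynomial (Fin 2) ℝ, p.totalDegree ≤ d ∧
      ∀ v, evalP p v = ∑ k ∈ Finset.range (d + 1), L k (fun _ ↦ v) := by
  choose p hdeg heval using fun k ↦ exists_evalP_eq_apply_diag (L k)
  refine ⟨∑ k ∈ Finset.range (d + 1), p k, ?_, fun v ↦ ?_⟩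
  · refine (MvPolynomial.totalDegree_finsetSum _ _).trans (Finset.sup_le fun k hk ↦ ?_)
    exact (hdeg k).trans (Nat.lt_succ_iff.mp (Finset.mem_range.mp hk))
  · simp [evalP, map_sum, ← heval]

theorem refTriangle_eq : refTriangle = {p : ℝ × ℝ | 0 ≤ p.1 ∧ 0 ≤ p.2 ∧ p.1 + p.2 ≤ 1} := by
  refine Subset.antisymm (convexHull_min ?_ ?_) ?_
  · rintro p (rfl | rfl | rfl) <;> norm_num
  · exact (convex_halfSpace_ge (LinearMap.fst ℝ ℝ ℝ).isLinear 0).inter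
      ((convex_halfSpace_ge (LinearMap.snd ℝ ℝ ℝ).isLinear 0).inter
        (convex_halfSpace_le (LinearMap.fst ℝ ℝ ℝ + LinearMap.snd ℝ ℝ ℝ).isLinear 1))
  · rintro ⟨a, b⟩ ⟨ha, hb, hab⟩
    have hp : ((a, b) : ℝ × ℝ) =
        ∑ i, ![1 - a - b, a, b] i • ![((0 : ℝ), (0 : ℝ)), (1, 0), (0, 1)] i := by
      simp [Fin.sum_univ_three]
    rw [hp]
    refine (convex_convexHull ℝ _).sum_mem (fun i _ ↦ ?_) ?_ (fun i _ ↦ subset_convexHull ℝ _ ?_)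
    · fin_cases i <;> simp <;> linarith
    · simp [Fin.sum_univ_three]; ring
    · fin_cases i <;> simp

theorem isCompact_refTriangle : IsCompact refTriangle :=
  (toFinite _).isCompact_convexHull (𝕜 := ℝ)

theorem zero_mem_refTriangle : (0 : ℝ × ℝ) ∈ refTriangle := by
  rw [refTriangle_eq]
  norm_num

theorem norm_le_one_of_mem_refTriangle {v : ℝ × ℝ} (hv : v ∈ refTriangle) : ‖v‖ ≤ 1 := by
  rw [refTriangle_eq] at hv
  obtain ⟨h1, h2, h3⟩ := hv
  exact max_le (by rw [Real.norm_of_nonneg h1]; linarith) (by rw [Real.norm_of_nonneg h2]; linarith)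

def subTriangle : Fin 4 → Set (ℝ × ℝ) :=
  ![{p | 1 / 2 ≤ p.1 ∧ 0 ≤ p.2 ∧ p.1 + p.2 ≤ 1},
    {p | 0 ≤ p.1 ∧ 1 / 2 ≤ p.2 ∧ p.1 + p.2 ≤ 1},
    {p | 0 ≤ p.1 ∧ 0 ≤ p.2 ∧ p.1 + p.2 ≤ 1 / 2},
    {p | p.1 ≤ 1 / 2 ∧ p.2 ≤ 1 / 2 ∧ 1 / 2 ≤ p.1 + p.2}]

theorem image_subdivMap_refTriangle (j : Fin 4) : subdivMap j '' refTriangle = subTriangle j := by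
  rw [refTriangle_eq]
  ext ⟨a, b⟩
  fin_cases j <;>
    simp only [subdivMap, subTriangle, Fin.reduceFinMk, Matrix.cons_val, mem_image, mem_ofPred_eq,
      Prod.exists, Prod.mk.injEq] <;>
    refine ⟨?_, fun ⟨h1, h2, h3⟩ ↦ ?_⟩ <;>
    try (rintro ⟨a', b', ⟨h1, h2, h3⟩, rfl, rfl⟩; exact ⟨by linarith, by linarith, by linarith⟩)
  · exact ⟨2 * a - 1, 2 * b, ⟨by linarith, by linarith, by linarith⟩, by ring, by ring⟩
  · exact ⟨2 * a, 2 * b - 1, ⟨by linarith, by linarith, by linarith⟩, by ring, by ring⟩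
  · exact ⟨2 * a, 2 * b, ⟨by linarith, by linarith, by linarith⟩, by ring, by ring⟩
  · exact ⟨1 - 2 * a, 1 - 2 * b, ⟨by linarith, by linarith, by linarith⟩, by ring, by ring⟩

theorem iUnion_subTriangle : ⋃ j, subTriangle j = refTriangle := by
  rw [refTriangle_eq]
  ext ⟨a, b⟩
  simp only [mem_iUnion, Fin.exists_fin_succ, Fin.exists_fin_zero, subTriangle,
    Matrix.cons_val_zero, Matrix.cons_val_succ, mem_ofPred_eq, or_false]
  constructor
  · rintro (⟨h1, h2, h3⟩ | ⟨h1, h2, h3⟩ | ⟨h1, h2, h3⟩ | ⟨h1, h2, h3⟩) <;>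
      exact ⟨by linarith, by linarith, by linarith⟩
  · rintro ⟨h1, h2, h3⟩
    by_cases ha : 1 / 2 ≤ a
    · exact Or.inl ⟨ha, h2, h3⟩
    by_cases hb : 1 / 2 ≤ b
    · exact Or.inr (Or.inl ⟨h1, hb, h3⟩)
    by_cases hab : a + b ≤ 1 / 2
    · exact Or.inr (Or.inr (Or.inl ⟨h1, h2, hab⟩))
    · exact Or.inr (Or.inr (Or.inr ⟨by linarith, by linarith, by linarith⟩))

theorem volume_midlines :
    volume {p : ℝ × ℝ | p.1 = 1 / 2 ∨ p.2 = 1 / 2 ∨ p.1 + p.2 = 1 / 2} = 0 := by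
  have hfst : LinearMap.fst ℝ ℝ ℝ ≠ 0 := fun h ↦ by simpa using LinearMap.congr_fun h (1, 0)
  have hsnd : LinearMap.snd ℝ ℝ ℝ ≠ 0 := fun h ↦ by simpa using LinearMap.congr_fun h (0, 1)
  have hsum : LinearMap.fst ℝ ℝ ℝ + LinearMap.snd ℝ ℝ ℝ ≠ 0 := fun h ↦ by
    simpa using LinearMap.congr_fun h (1, 0)
  simp only [ofPred_or]
  exact measure_union_null (addHaar_setOf_apply_eq volume hfst _)
    (measure_union_null (addHaar_setOf_apply_eq volume hsnd _)
      (addHaar_setOf_apply_eq volume hsum _))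

theorem pairwise_aedisjoint_subTriangle : Pairwise (AEDisjoint volume on subTriangle) := by
  intro i j hij
  refine measure_mono_null (fun p ⟨hi, hj⟩ ↦ ?_) volume_midlines
  fin_cases i <;> fin_cases j <;>
    simp only [subTriangle, Fin.reduceFinMk, Matrix.cons_val, mem_ofPred_eq] at hi hj hij ⊢ <;>
    obtain ⟨h1, h2, h3⟩ := hi <;> obtain ⟨h4, h5, h6⟩ := hj
  all_goals first
    | exact absurd rfl hij
    | exact Or.inl (by linarith)
    | exact Or.inr (Or.inl (by linarith))
    | exact Or.inr (Or.inr (by linarith))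

theorem exists_subdivMap_eq (j : Fin 4) :
    ∃ (b : ℝ × ℝ) (c : ℝ), |c| = 2⁻¹ ∧ subdivMap j = fun v ↦ b + c • v := by
  fin_cases j
  · exact ⟨(1 / 2, 0), 1 / 2, by norm_num, by ext <;> simp [subdivMap] <;> ring⟩
  · exact ⟨(0, 1 / 2), 1 / 2, by norm_num, by ext <;> simp [subdivMap] <;> ring⟩
  · exact ⟨(0, 0), 1 / 2, by norm_num, by ext <;> simp [subdivMap] <;> ring⟩
  · exact ⟨(1 / 2, 1 / 2), -(1 / 2), by norm_num, by ext <;> simp [subdivMap] <;> ring⟩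

theorem exists_compSubdiv_eq {m : ℕ} (s : Fin m → Fin 4) :
    ∃ (b : ℝ × ℝ) (c : ℝ), |c| = 2⁻¹ ^ m ∧ compSubdiv s = fun v ↦ b + c • v := by
  induction m with
  | zero => exact ⟨0, 1, by simp, by ext <;> simp [compSubdiv]⟩
  | succ m ih =>
    obtain ⟨b, c, hc, hbc⟩ := ih fun i ↦ s i.succ
    obtain ⟨b₀, c₀, hc₀, hbc₀⟩ := exists_subdivMap_eq (s 0)
    refine ⟨b₀ + c₀ • b, c₀ * c, by rw [abs_mul, hc₀, hc, pow_succ'], ?_⟩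
    ext v <;> simp [compSubdiv, hbc, hbc₀, mul_assoc] <;> ring

theorem continuous_subdivMap (j : Fin 4) : Continuous (subdivMap j) := by
  obtain ⟨b, c, -, hbc⟩ := exists_subdivMap_eq j
  rw [hbc]
  fun_prop

theorem continuous_compSubdiv {m : ℕ} (s : Fin m → Fin 4) : Continuous (compSubdiv s) := by
  obtain ⟨b, c, -, hbc⟩ := exists_compSubdiv_eq s
  rw [hbc]
  fun_prop

theorem mapsTo_subdivMap (j : Fin 4) : MapsTo (subdivMap j) refTriangle refTriangle := by
  rw [mapsTo_iff_image_subset, image_subdivMap_refTriangle, ← iUnion_subTriangle]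
  exact subset_iUnion _ j

theorem mapsTo_compSubdiv {m : ℕ} (s : Fin m → Fin 4) :
    MapsTo (compSubdiv s) refTriangle refTriangle := by
  induction m with
  | zero => exact mapsTo_id _
  | succ m ih => exact (mapsTo_subdivMap (s 0)).comp (ih fun i ↦ s i.succ)

section Integral

variable {F : Type*} [NormedAddCommGroup F] [NormedSpace ℝ F]

theorem setIntegral_refTriangle_eq_sum_subdivMap {g : ℝ × ℝ → F}
    (hg : IntegrableOn g refTriangle) :
    ∫ p in refTriangle, g p = (4 : ℝ)⁻¹ • ∑ j, ∫ v in refTriangle, g (subdivMap j v) := by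
  have hmeas : ∀ j, NullMeasurableSet (subTriangle j) := fun j ↦ by
    rw [← image_subdivMap_refTriangle]
    exact (isCompact_refTriangle.image (continuous_subdivMap j)).measurableSet.nullMeasurableSet
  rw [← iUnion_subTriangle] at hg
  conv_lhs => rw [← iUnion_subTriangle]
  rw [integral_iUnion_ae hmeas pairwise_aedisjoint_subTriangle hg, tsum_fintype, Finset.smul_sum]
  refine Finset.sum_congr rfl fun j _ ↦ ?_
  obtain ⟨b, c, hc, hbc⟩ := exists_subdivMap_eq j
  rw [← image_subdivMap_refTriangle, hbc, setIntegral_image_add_smul volume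
    isCompact_refTriangle.measurableSet b (fun h ↦ by norm_num [h] at hc) g]
  norm_num [hc]

theorem setIntegral_refTriangle_eq_sum_compSubdiv (m : ℕ) {g : ℝ × ℝ → F}
    (hg : ContinuousOn g refTriangle) :
    ∫ p in refTriangle, g p =
      ((4 : ℝ) ^ m)⁻¹ • ∑ s : Fin m → Fin 4, ∫ v in refTriangle, g (compSubdiv s v) := by
  induction m generalizing g with
  | zero => simp [compSubdiv]
  | succ m ih =>
    calc ∫ p in refTriangle, g p
        = (4 : ℝ)⁻¹ • ∑ j, ((4 : ℝ) ^ m)⁻¹ • ∑ t : Fin m → Fin 4,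
            ∫ v in refTriangle, g (subdivMap j (compSubdiv t v)) := by
          rw [setIntegral_refTriangle_eq_sum_subdivMap
            (hg.integrableOn_compact isCompact_refTriangle)]
          congr! 2 with j
          exact ih (hg.comp (continuous_subdivMap j).continuousOn (mapsTo_subdivMap j))
      _ = ((4 : ℝ) ^ (m + 1))⁻¹ • ∑ j, ∑ t : Fin m → Fin 4,
            ∫ v in refTriangle, g (subdivMap j (compSubdiv t v)) := by
          rw [← Finset.smul_sum, smul_smul, pow_succ', mul_inv]
      _ = _ := by
          rw [← (Fin.consEquiv fun _ ↦ Fin 4).sum_comp, Fintype.sum_prod_type]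
          rfl

end Integral

section QuadratureRule

variable {n : ℕ} {x : Fin n → ℝ × ℝ} {w : Fin n → ℝ}

theorem Em_eq_sum_errQ (m : ℕ) {f : ℝ × ℝ → ℝ} (hf : ContinuousOn f refTriangle) :
    Em x w m f = ((4 : ℝ) ^ m)⁻¹ * ∑ s : Fin m → Fin 4, errQ x w (f ∘ compSubdiv s) := by
  rw [Em, Qm, setIntegral_refTriangle_eq_sum_compSubdiv m hf, smul_eq_mul, ← mul_sub,
    ← Finset.sum_sub_distrib]
  rfl

theorem errQ_sub {g h : ℝ × ℝ → ℝ} (hg : IntegrableOn g refTriangle)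
    (hh : IntegrableOn h refTriangle) : errQ x w (g - h) = errQ x w g - errQ x w h := by
  simp only [errQ, quadApply, Pi.sub_apply, integral_sub hg hh, mul_sub, Finset.sum_sub_distrib]
  ring

theorem abs_errQ_le (hx : ∀ i, x i ∈ refTriangle) {g : ℝ × ℝ → ℝ} {ε : ℝ}
    (hg : ∀ v ∈ refTriangle, |g v| ≤ ε) :
    |errQ x w g| ≤ (volume.real refTriangle + ∑ i, |w i|) * ε := by
  have hint : |∫ q in refTriangle, g q| ≤ ε * volume.real refTriangle := by
    simpa only [Real.norm_eq_abs] using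
      norm_setIntegral_le_of_norm_le_const (f := g) isCompact_refTriangle.measure_lt_top
        (by simpa only [Real.norm_eq_abs] using hg)
  have hquad : |quadApply x w g| ≤ ∑ i, |w i| * ε := by
    refine (Finset.abs_sum_le_sum_abs _ _).trans (Finset.sum_le_sum fun i _ ↦ ?_)
    rw [abs_mul]
    exact mul_le_mul_of_nonneg_left (hg _ (hx i)) (abs_nonneg _)
  calc |errQ x w g| ≤ |∫ q in refTriangle, g q| + |quadApply x w g| := abs_sub _ _
    _ ≤ ε * volume.real refTriangle + ∑ i, |w i| * ε := add_le_add hint hquad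
    _ = _ := by rw [← Finset.sum_mul]; ring

theorem abs_errQ_le_of_exactDeg (hx : ∀ i, x i ∈ refTriangle) {d : ℕ} (hexact : ExactDeg x w d)
    {g : ℝ × ℝ → ℝ} (hg : IntegrableOn g refTriangle) {p : MvPolynomial (Fin 2) ℝ}
    (hp : p.totalDegree ≤ d) {ε : ℝ} (hε : ∀ v ∈ refTriangle, |g v - evalP p v| ≤ ε) :
    |errQ x w g| ≤ (volume.real refTriangle + ∑ i, |w i|) * ε := by
  have hp0 : errQ x w (evalP p) = 0 := sub_eq_zero.mpr (hexact p hp)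
  rw [← sub_zero (errQ x w g), ← hp0, ← errQ_sub hg
    ((continuous_evalP p).continuousOn.integrableOn_compact isCompact_refTriangle)]
  exact abs_errQ_le hx hε

theorem abs_errQ_comp_compSubdiv_le (hx : ∀ i, x i ∈ refTriangle) {d : ℕ}
    (hexact : ExactDeg x w d) {f : ℝ × ℝ → ℝ} (hf : ContinuousOn f refTriangle) {M : ℝ}
    (hM0 : 0 ≤ M) (hM : ∀ a ∈ refTriangle, ∀ y ∈ refTriangle,
      ‖f y - ∑ k ∈ Finset.range (d + 1), (k ! : ℝ)⁻¹ • iteratedFDeriv ℝ k f a (fun _ ↦ y - a)‖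
        ≤ M * ‖y - a‖ ^ (d + 1))
    {m : ℕ} (s : Fin m → Fin 4) :
    |errQ x w (f ∘ compSubdiv s)|
      ≤ (volume.real refTriangle + ∑ i, |w i|) * (M * ((2 : ℝ) ^ (m * (d + 1)))⁻¹) := by
  obtain ⟨b, c, hc, hbc⟩ := exists_compSubdiv_eq s
  -- the Taylor polynomial of `f` at the corner `b` of the cell, pulled back along `compSubdiv s`
  obtain ⟨p, hp, hpeval⟩ := exists_evalP_eq_sum_apply_diag d
    fun k ↦ ((k ! : ℝ)⁻¹ * c ^ k) • iteratedFDeriv ℝ k f b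
  have hmem : ∀ v ∈ refTriangle, b + c • v ∈ refTriangle := fun v hv ↦ by
    simpa [hbc] using mapsTo_compSubdiv s hv
  have hb : b ∈ refTriangle := by simpa using hmem 0 zero_mem_refTriangle
  refine abs_errQ_le_of_exactDeg hx hexact ((hf.comp (continuous_compSubdiv s).continuousOn
    (mapsTo_compSubdiv s)).integrableOn_compact isCompact_refTriangle) hp fun v hv ↦ ?_
  have htaylor : evalP p v = ∑ k ∈ Finset.range (d + 1),
      (k ! : ℝ)⁻¹ • iteratedFDeriv ℝ k f b (fun _ ↦ (b + c • v) - b) := by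
    simp [hpeval, ContinuousMultilinearMap.map_smul_univ, mul_assoc]
  calc |(f ∘ compSubdiv s) v - evalP p v|
      = ‖f (b + c • v) - ∑ k ∈ Finset.range (d + 1),
          (k ! : ℝ)⁻¹ • iteratedFDeriv ℝ k f b (fun _ ↦ (b + c • v) - b)‖ := by
        rw [htaylor, hbc, Real.norm_eq_abs]; rfl
    _ ≤ M * ‖(b + c • v) - b‖ ^ (d + 1) := hM b hb _ (hmem v hv)
    _ ≤ M * ((2 : ℝ) ^ (m * (d + 1)))⁻¹ := by
        rw [add_sub_cancel_left, norm_smul, Real.norm_eq_abs, hc, pow_mul, ← inv_pow, ← inv_pow]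
        gcongr
        exact mul_le_of_le_one_right (by positivity) (norm_le_one_of_mem_refTriangle hv)

end QuadratureRule

/-- if Q is exact for degree ≤ d and f is C^{d+1} on an open set containing T,
then |E_m(f)| ≤ C · 2^{-m(d+1)} for some C ≥ 0. -/
theorem Em_le_of_contDiffOn {n d : ℕ}
    (x : Fin n → ℝ × ℝ) (w : Fin n → ℝ)
    (hx : ∀ i, x i ∈ refTriangle) (hexact : ExactDeg x w d)
    (f : ℝ × ℝ → ℝ) (U : Set (ℝ × ℝ)) (hU : IsOpen U) (hTU : refTriangle ⊆ U)
    (hf : ContDiffOn ℝ (d + 1) f U) :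
    ∃ C : ℝ, 0 ≤ C ∧ ∀ m : ℕ,
      |Em x w m f| ≤ C * ((2 : ℝ) ^ (m * (d + 1)))⁻¹ := by
  have hfT : ContinuousOn f refTriangle := hf.continuousOn.mono hTU
  obtain ⟨M, hM0, hM⟩ := exists_norm_sub_taylor_le_of_contDiffOn isCompact_refTriangle
    (convex_convexHull ℝ _) hU hTU hf
  set W := volume.real refTriangle + ∑ i, |w i|
  have hW : 0 ≤ W := add_nonneg measureReal_nonneg (Finset.sum_nonneg fun i _ ↦ abs_nonneg _)
  refine ⟨W * M, mul_nonneg hW hM0, fun m ↦ ?_⟩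
  rw [Em_eq_sum_errQ m hfT, abs_mul, abs_inv, abs_pow, abs_of_pos four_pos]
  calc ((4 : ℝ) ^ m)⁻¹ * |∑ s : Fin m → Fin 4, errQ x w (f ∘ compSubdiv s)|
      ≤ ((4 : ℝ) ^ m)⁻¹ * ∑ _s : Fin m → Fin 4, W * (M * ((2 : ℝ) ^ (m * (d + 1)))⁻¹) := by
        gcongr
        exact (Finset.abs_sum_le_sum_abs _ _).trans (Finset.sum_le_sum fun s _ ↦
          abs_errQ_comp_compSubdiv_le hx hexact hfT hM0 hM s)
    _ = W * M * ((2 : ℝ) ^ (m * (d + 1)))⁻¹ := by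
        simp only [Finset.sum_const, Finset.card_univ, Fintype.card_fun, Fintype.card_fin,
          nsmul_eq_mul, Nat.cast_pow, Nat.cast_ofNat]
        field_simp
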